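/- Let f(x) = x(1-x)(x-a) for x ∈ ℝ, with a ∈ (0,1). Then for all real u, v: (f(u) - f(v))(u - v) ≤ ((1 + a² - a)/3)(u - v)². -/
import Mathlib

theorem stmt_7 (a : ℝ) (ha : a ∈ Set.Ioo (0:ℝ) 1)
    (f : ℝ → ℝ) (hf : ∀ x, f x = x * (1 - x) * (x - a)) :
    ∀ u v : ℝ, (f u - f v) * (u - v) ≤ ((1 + a ^ 2 - a) / 3) * (u - v) ^ 2 := by
  intro u v
  rw [hf, hf]
  nlinarith [sq_nonneg (u - v), sq_nonneg (u + v), sq_nonneg (3*(u+v) - 2*(1+a)), sq_nonneg (u-v), mul_nonneg (sq_nonneg (u-v)) (sq_nonneg (3*(u+v) - 2*(1+a)))]
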